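/- arXiv:2508.06774 — 2 statements merged into one kernel-verified Lean document; each statement's English description precedes it below -/
import Mathlib

section
/- Let x₁,…,xₙ ∈ ℝ^d and ζ₁,…,ζₙ ∈ ℝ^{d'}, and set yᵢ = (xᵢ, ζᵢ) ∈ ℝ^{d+d'}. Let ε, M > 0 and let d_T : [n]×[n] → ℝ_{≥0} satisfy ‖ζᵢ − ζⱼ‖₁ ≤ ε·d_T(i,j) for all i, j. Let b ∈ ℝⁿ with Σᵢ bᵢ = 0, and suppose some feasible flow γ realizing EMD_X(b) (i.e., with Σᵢⱼ γᵢⱼ·‖xᵢ − xⱼ‖₁ = EMD_X(b)) satisfies Σᵢⱼ γᵢⱼ·d_T(i,j) ≤ M·EMD_X(b). Then EMD_X(b) ≤ EMD_Y(b) ≤ (1 + ε·M)·EMD_X(b), where EMD_X and EMD_Y denote the min-cost-flow values with edge costs ‖xᵢ − xⱼ‖₁ and ‖yᵢ − yⱼ‖₁ respectively. -/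
open Finset

/-- ℓ₁ distance on functions `ι → ℝ`. -/
noncomputable def l1dist {ι : Type} [Fintype ι] (u v : ι → ℝ) : ℝ := ∑ k, |u k - v k|

/-- Min-cost-flow Earth Mover's Distance of a vector `b` (with `∑ b = 0`) with respect to
the cost matrix `cost`. -/
noncomputable def EMDgen {ι : Type} [Fintype ι] (cost : ι → ι → ℝ) (b : ι → ℝ) : ℝ :=
  sInf { c : ℝ | ∃ γ : ι → ι → ℝ, (∀ i j, 0 ≤ γ i j) ∧
    (∀ i, ∑ j, γ i j = max (b i) 0) ∧ (∀ j, ∑ i, γ i j = max (-(b j)) 0) ∧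
    c = ∑ i, ∑ j, γ i j * cost i j }

lemma l1dist_nonneg {ι : Type} [Fintype ι] (u v : ι → ℝ) : 0 ≤ l1dist u v :=
  sum_nonneg fun _ _ => abs_nonneg _

section Flow

variable {ι : Type} [Fintype ι]

def IsFlow (b : ι → ℝ) (γ : ι → ι → ℝ) : Prop :=
  (∀ i j, 0 ≤ γ i j) ∧ (∀ i, ∑ j, γ i j = max (b i) 0) ∧ (∀ j, ∑ i, γ i j = max (-(b j)) 0)

noncomputable def flowCost (cost γ : ι → ι → ℝ) : ℝ := ∑ i, ∑ j, γ i j * cost i j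

lemma flowCost_add (c c' γ : ι → ι → ℝ) :
    flowCost (fun i j => c i j + c' i j) γ = flowCost c γ + flowCost c' γ := by
  simp only [flowCost, mul_add, sum_add_distrib]

lemma flowCost_const_mul (a : ℝ) (c γ : ι → ι → ℝ) :
    flowCost (fun i j => a * c i j) γ = a * flowCost c γ := by
  simp only [flowCost, mul_sum]
  exact sum_congr rfl fun _ _ => sum_congr rfl fun _ _ => by ring

lemma flowCost_mono {c c' γ : ι → ι → ℝ} (hγ : ∀ i j, 0 ≤ γ i j) (h : ∀ i j, c i j ≤ c' i j) :
    flowCost c γ ≤ flowCost c' γ :=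
  sum_le_sum fun i _ => sum_le_sum fun j _ => mul_le_mul_of_nonneg_left (h i j) (hγ i j)

lemma EMDgen_eq_sInf_image (cost : ι → ι → ℝ) (b : ι → ℝ) :
    EMDgen cost b = sInf (flowCost cost '' {γ | IsFlow b γ}) := by
  simp only [EMDgen, IsFlow, flowCost, Set.image, Set.mem_ofPred_eq, and_assoc, eq_comm]

/-- The entries of a flow are bounded by `b₊`, so every cost matrix gives bounded flow costs. -/
lemma bddBelow_flowCost_image (cost : ι → ι → ℝ) (b : ι → ℝ) :
    BddBelow (flowCost cost '' {γ | IsFlow b γ}) := by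
  refine ⟨-∑ i, ∑ j, max (b i) 0 * |cost i j|, ?_⟩
  rintro _ ⟨γ, ⟨hnonneg, hrow, -⟩, rfl⟩
  rw [flowCost, ← sum_neg_distrib]
  refine sum_le_sum fun i _ => ?_
  rw [← sum_neg_distrib]
  refine sum_le_sum fun j _ => ?_
  have hγ_le : γ i j ≤ max (b i) 0 :=
    hrow i ▸ single_le_sum (fun k _ => hnonneg i k) (mem_univ j)
  calc -(max (b i) 0 * |cost i j|) ≤ -(γ i j * |cost i j|) :=
        neg_le_neg (mul_le_mul_of_nonneg_right hγ_le (abs_nonneg _))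
    _ ≤ γ i j * cost i j := by
        rw [← mul_neg]
        exact mul_le_mul_of_nonneg_left (neg_abs_le _) (hnonneg i j)

lemma EMDgen_le_flowCost {cost γ : ι → ι → ℝ} {b : ι → ℝ} (hγ : IsFlow b γ) :
    EMDgen cost b ≤ flowCost cost γ := by
  rw [EMDgen_eq_sInf_image]
  exact csInf_le (bddBelow_flowCost_image cost b) ⟨γ, hγ, rfl⟩

lemma EMDgen_mono {c c' : ι → ι → ℝ} {b : ι → ℝ} (hb : ∃ γ, IsFlow b γ)
    (h : ∀ i j, c i j ≤ c' i j) : EMDgen c b ≤ EMDgen c' b := by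
  obtain ⟨γ, hγ⟩ := hb
  rw [EMDgen_eq_sInf_image c']
  refine le_csInf ⟨_, γ, hγ, rfl⟩ ?_
  rintro _ ⟨γ', hγ', rfl⟩
  exact (EMDgen_le_flowCost hγ').trans (flowCost_mono hγ'.1 h)

end Flow

theorem perturbed_emd_general {n d d' : ℕ} (x : Fin n → Fin d → ℝ) (ζ : Fin n → Fin d' → ℝ)
    (ε M : ℝ) (hε : 0 < ε)
    (dT : Fin n → Fin n → ℝ)
    (hζ : ∀ i j, l1dist (ζ i) (ζ j) ≤ ε * dT i j)
    (b : Fin n → ℝ)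
    (γ : Fin n → Fin n → ℝ)
    (hγnonneg : ∀ i j, 0 ≤ γ i j)
    (hγrow : ∀ i, ∑ j, γ i j = max (b i) 0)
    (hγcol : ∀ j, ∑ i, γ i j = max (-(b j)) 0)
    (hγopt : ∑ i, ∑ j, γ i j * l1dist (x i) (x j) =
      EMDgen (fun i j => l1dist (x i) (x j)) b)
    (hγT : ∑ i, ∑ j, γ i j * dT i j ≤ M * EMDgen (fun i j => l1dist (x i) (x j)) b) :
    EMDgen (fun i j => l1dist (x i) (x j)) b ≤
      EMDgen (fun i j => l1dist (x i) (x j) + l1dist (ζ i) (ζ j)) b ∧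
    EMDgen (fun i j => l1dist (x i) (x j) + l1dist (ζ i) (ζ j)) b ≤
      (1 + ε * M) * EMDgen (fun i j => l1dist (x i) (x j)) b := by
  have hγ : IsFlow b γ := ⟨hγnonneg, hγrow, hγcol⟩
  refine ⟨EMDgen_mono ⟨γ, hγ⟩ fun i j => le_add_of_nonneg_right (l1dist_nonneg _ _), ?_⟩
  set emdX := EMDgen (fun i j => l1dist (x i) (x j)) b
  calc EMDgen (fun i j => l1dist (x i) (x j) + l1dist (ζ i) (ζ j)) b
      ≤ flowCost (fun i j => l1dist (x i) (x j) + l1dist (ζ i) (ζ j)) γ :=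
        EMDgen_le_flowCost hγ
    _ = emdX + flowCost (fun i j => l1dist (ζ i) (ζ j)) γ := by
        rw [flowCost_add, flowCost, hγopt]
    _ ≤ emdX + ε * flowCost dT γ := by
        rw [← flowCost_const_mul]
        exact add_le_add_right (flowCost_mono hγnonneg hζ) _
    _ ≤ emdX + ε * (M * emdX) := by gcongr; exact hγT
    _ = (1 + ε * M) * emdX := by ring

/-- if some optimal flow `γ` for `EMD_X(b)` satisfies
`∑ γᵢⱼ·d_T(i,j) ≤ M·EMD_X(b)`, and `‖ζᵢ − ζⱼ‖₁ ≤ ε·d_T(i,j)`, then for the concatenated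
points `yᵢ = (xᵢ, ζᵢ)` one has `EMD_X(b) ≤ EMD_Y(b) ≤ (1 + ε·M)·EMD_X(b)`.
(Here the `Y`-costs are `‖yᵢ − yⱼ‖₁ = ‖xᵢ − xⱼ‖₁ + ‖ζᵢ − ζⱼ‖₁`.) -/
theorem perturbed_emd {n d d' : ℕ} (x : Fin n → Fin d → ℝ) (ζ : Fin n → Fin d' → ℝ)
    (ε M : ℝ) (hε : 0 < ε) (hM : 0 < M)
    (dT : Fin n → Fin n → ℝ) (hdT : ∀ i j, 0 ≤ dT i j)
    (hζ : ∀ i j, l1dist (ζ i) (ζ j) ≤ ε * dT i j)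
    (b : Fin n → ℝ) (hb : ∑ i, b i = 0)
    (γ : Fin n → Fin n → ℝ)
    (hγnonneg : ∀ i j, 0 ≤ γ i j)
    (hγrow : ∀ i, ∑ j, γ i j = max (b i) 0)
    (hγcol : ∀ j, ∑ i, γ i j = max (-(b j)) 0)
    (hγopt : ∑ i, ∑ j, γ i j * l1dist (x i) (x j) =
      EMDgen (fun i j => l1dist (x i) (x j)) b)
    (hγT : ∑ i, ∑ j, γ i j * dT i j ≤ M * EMDgen (fun i j => l1dist (x i) (x j)) b) :
    EMDgen (fun i j => l1dist (x i) (x j)) b ≤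
      EMDgen (fun i j => l1dist (x i) (x j) + l1dist (ζ i) (ζ j)) b ∧
    EMDgen (fun i j => l1dist (x i) (x j) + l1dist (ζ i) (ζ j)) b ≤
      (1 + ε * M) * EMDgen (fun i j => l1dist (x i) (x j)) b :=
  perturbed_emd_general x ζ ε M hε dT hζ b γ hγnonneg hγrow hγcol hγopt hγT
end

section
/- There exist absolute constants c₁, c₂, c₃ > 0 such that the following holds. Let n ≥ 1, t > 0, let C ∈ ℝ^{n×n} have positive entries, let K ≥ 1, γ ∈ (0, K], 0 < η ≤ c₁·γ/K², let R be an integer with R ≥ c₂·ln(2n²)/(η·γ), and let χ ∈ (0,1) with χ ≤ c₃·γ/(R·K). Consider the multiplicative weights update: (α¹,β¹) = (0,0) ∈ ℤⁿ×ℤⁿ; for r = 1,…,R−1, let (D^r, P^r) be rounded duals of (α^r, β^r) with weights w^r and let λ^r be the distribution proportional to w^r; let (α̃^r, β̃^r) ∈ ℤⁿ×ℤⁿ be any vectors satisfying, with ṽ^r = (1/t)·(Σᵢ α̃^r_i − Σⱼ β̃^r_j): (i) Σ_{i,j,σ} λ^r_{i,j,σ}·σ·(α̃^r_i − β̃^r_j)/C_{ij}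 ≤ ṽ^r − γ, (ii) |α̃^r_i − β̃^r_j| ≤ K·C_{ij} for all i,j, and (iii) |ṽ^r| ≤ K; and set (α^{r+1}, β^{r+1}) = (α^r + α̃^r, β^r + β̃^r). Then (α, β) := (1/R)·(α^R, β^R) satisfies (1/t)·(Σᵢ αᵢ − Σⱼ βⱼ) − max_{i,j} |αᵢ − βⱼ|/C_{ij} ≥ γ/10; in particular (α,β) ∈ Γ_t := {(α,β) ∈ ℝⁿ×ℝⁿ : (1/t)·(Σᵢ αᵢ − Σⱼ βⱼ) − max_{i,j} |αᵢ − βⱼ|/C_{ij} > 0}. -/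
open Finset

/-- `(D, P)` is a rounded-dual pair for `(α, β)` with rounding parameter `χ`. -/
def IsRoundedDual {n : ℕ} (χ : ℝ) (α β : Fin n → ℤ)
    (D P : Fin n → Fin n → ℝ) : Prop :=
  (∀ i j, D i j = 0 ∨ ∃ h : ℕ, D i j = (1 + χ) ^ h) ∧
  (∀ i j, D i j ≤ |(α i : ℝ) - (β j : ℝ)| ∧ |(α i : ℝ) - (β j : ℝ)| ≤ (1 + χ) * D i j) ∧
  (∀ i j, P i j = if 0 ≤ α i - β j then (1 : ℝ) else -1)

/-- The MWU weight `w_{i,j,σ} = exp(η·σ·P_{ij}·D_{ij}/C_{ij})`. -/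
noncomputable def wt {n : ℕ} (η : ℝ) (C D P : Fin n → Fin n → ℝ)
    (i j : Fin n) (σ : ℝ) : ℝ :=
  Real.exp (η * (σ * P i j) * D i j / C i j)

/-- Total weight `W = ∑_{i,j,σ∈{−1,1}} w_{i,j,σ}`. -/
noncomputable def totW {n : ℕ} (η : ℝ) (C D P : Fin n → Fin n → ℝ) : ℝ :=
  ∑ i, ∑ j, (wt η C D P i j 1 + wt η C D P i j (-1))

/-- The probability distribution `λ` proportional to the weights `w`. -/
noncomputable def lamOf {n : ℕ} (η : ℝ) (C D P : Fin n → Fin n → ℝ)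
    (i j : Fin n) (σ : ℝ) : ℝ :=
  wt η C D P i j σ / totW η C D P

/-!
Track the potential `Φ(α, β) = ∑_{i,j,σ} exp (η σ (αᵢ - βⱼ) / Cᵢⱼ)` of the *exact* duals. Each
round multiplies `Φ` by at most `exp (η ṽ - η (γ - 6 K δ - η K²))` with `δ = η χ R K`: the oracle's
guarantee (i) holds for the rounded weights, which are within relative error `2δ` of the exact
ones because `|αᵢ - βⱼ| ≤ R K Cᵢⱼ` is rounded with relative error `χ`. Telescoping from
`Φ¹ = 2n²` and comparing with the single term `exp (η |α^R_i - β^R_j| / Cᵢⱼ) ≤ Φ^R` gives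
`η |α^R_i - β^R_j| / Cᵢⱼ ≤ log (2n²) + η ṽ(α^R, β^R) - (R - 1) η γ / 2`; dividing by `η R` and
using `R ≥ 10 log (2n²) / (η γ)` leaves a gap of `γ / 10`.
-/

open Real

section MultiplicativeWeights

variable {E : Type*} {s : Finset E} {w u ℓ : E → ℝ} {η K m ε : ℝ}

theorem exp_le_one_add_add_sq {x : ℝ} (hx : |x| ≤ 1) : exp x ≤ 1 + x + x ^ 2 := by
  linarith [(abs_le.mp (abs_exp_sub_one_sub_id_le hx)).2]

theorem abs_exp_sub_exp_le {a b : ℝ} (h : |a - b| ≤ 1) :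
    |exp a - exp b| ≤ 2 * |a - b| * exp b := by
  have hab : exp a - exp b = exp b * (exp (a - b) - 1) := by
    rw [mul_sub, ← exp_add]; ring_nf
  rw [hab, abs_mul, abs_of_pos (exp_pos b), mul_comm]
  exact mul_le_mul_of_nonneg_right (abs_exp_sub_one_le h) (exp_pos b).le

theorem sum_mul_exp_le_of_sum_mul_le (hw : ∀ e ∈ s, 0 ≤ w e) (hℓ : ∀ e ∈ s, |ℓ e| ≤ K)
    (hη : 0 ≤ η) (hηK : η * K ≤ 1) (h : ∑ e ∈ s, w e * ℓ e ≤ (∑ e ∈ s, w e) * m) :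
    ∑ e ∈ s, w e * exp (η * ℓ e) ≤ (∑ e ∈ s, w e) * exp (η * m + η ^ 2 * K ^ 2) := by
  have hterm : ∀ e ∈ s, w e * exp (η * ℓ e) ≤ w e * (1 + η ^ 2 * K ^ 2) + η * (w e * ℓ e) := by
    intro e he
    have habs : |η * ℓ e| ≤ η * K := by
      rw [abs_mul, abs_of_nonneg hη]; exact mul_le_mul_of_nonneg_left (hℓ e he) hη
    have hsq : (η * ℓ e) ^ 2 ≤ η ^ 2 * K ^ 2 := by
      rw [← mul_pow, ← sq_abs]; exact pow_le_pow_left₀ (abs_nonneg _) habs 2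
    have := mul_le_mul_of_nonneg_left (exp_le_one_add_add_sq (habs.trans hηK)) (hw e he)
    nlinarith [hw e he]
  have hW : 0 ≤ ∑ e ∈ s, w e := sum_nonneg hw
  calc ∑ e ∈ s, w e * exp (η * ℓ e)
      ≤ ∑ e ∈ s, (w e * (1 + η ^ 2 * K ^ 2) + η * (w e * ℓ e)) := sum_le_sum hterm
    _ = (∑ e ∈ s, w e) * (1 + η ^ 2 * K ^ 2) + η * ∑ e ∈ s, w e * ℓ e := by
      rw [sum_add_distrib, ← sum_mul, ← mul_sum]
    _ ≤ (∑ e ∈ s, w e) * (1 + (η * m + η ^ 2 * K ^ 2)) := by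
      nlinarith [mul_le_mul_of_nonneg_left h hη]
    _ ≤ (∑ e ∈ s, w e) * exp (η * m + η ^ 2 * K ^ 2) := by
      gcongr; linarith [add_one_le_exp (η * m + η ^ 2 * K ^ 2)]

theorem sum_mul_le_of_abs_sub_le (hu : ∀ e ∈ s, |u e - w e| ≤ ε * w e)
    (hℓ : ∀ e ∈ s, |ℓ e| ≤ K) (hm : |m| ≤ 2 * K) (h : ∑ e ∈ s, u e * ℓ e ≤ (∑ e ∈ s, u e) * m) :
    ∑ e ∈ s, w e * ℓ e ≤ (∑ e ∈ s, w e) * (m + 3 * K * ε) := by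
  have hεw : ∀ e ∈ s, 0 ≤ ε * w e := fun e he => (abs_nonneg _).trans (hu e he)
  have hK : 0 ≤ K := by linarith [abs_nonneg m]
  have hgain : ∑ e ∈ s, (w e - u e) * ℓ e ≤ K * ∑ e ∈ s, ε * w e := by
    rw [mul_sum]
    refine sum_le_sum fun e he => ?_
    calc (w e - u e) * ℓ e ≤ |(w e - u e) * ℓ e| := le_abs_self _
      _ = |u e - w e| * |ℓ e| := by rw [abs_mul, abs_sub_comm]
      _ ≤ ε * w e * K := mul_le_mul (hu e he) (hℓ e he) (abs_nonneg _) (hεw e he)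
      _ = K * (ε * w e) := mul_comm _ _
  have htotal : |∑ e ∈ s, u e - ∑ e ∈ s, w e| ≤ ∑ e ∈ s, ε * w e := by
    rw [← sum_sub_distrib]; exact (abs_sum_le_sum_abs _ _).trans (sum_le_sum hu)
  have hshift : (∑ e ∈ s, u e - ∑ e ∈ s, w e) * m ≤ (∑ e ∈ s, ε * w e) * (2 * K) :=
    (le_abs_self _).trans (by
      rw [abs_mul]; exact mul_le_mul htotal hm (abs_nonneg _) (sum_nonneg hεw))
  have hsplit : ∑ e ∈ s, w e * ℓ e = ∑ e ∈ s, u e * ℓ e + ∑ e ∈ s, (w e - u e) * ℓ e := by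
    rw [← sum_add_distrib]; exact sum_congr rfl fun e _ => by ring
  rw [← mul_sum] at hgain hshift
  nlinarith

end MultiplicativeWeights

theorem abs_sum_sub_sum_le_card_mul {ι : Type*} (S : Finset ι) {a b : ι → ℝ} {B : ℝ}
    (h : ∀ s ∈ S, |a s - b s| ≤ B) : |∑ s ∈ S, a s - ∑ s ∈ S, b s| ≤ #S * B := by
  rw [← sum_sub_distrib, ← nsmul_eq_mul]
  exact (abs_sum_le_sum_abs _ _).trans (sum_le_card_nsmul _ _ _ h)

theorem le_mul_exp_sum_Ico_of_le_mul_exp {a b : ℕ → ℝ} {R : ℕ} (hR : 1 ≤ R)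
    (h : ∀ r, 1 ≤ r → r < R → a (r + 1) ≤ a r * exp (b r)) :
    a R ≤ a 1 * exp (∑ r ∈ Ico 1 R, b r) := by
  induction R, hR using Nat.le_induction with
  | base => simp
  | succ R hR ih =>
    calc a (R + 1) ≤ a R * exp (b R) := h R hR R.lt_succ_self
      _ ≤ a 1 * exp (∑ r ∈ Ico 1 R, b r) * exp (b R) :=
        mul_le_mul_of_nonneg_right (ih fun r h1 h2 => h r h1 (h2.trans R.lt_succ_self))
          (exp_pos _).le
      _ = a 1 * exp (∑ r ∈ Ico 1 (R + 1), b r) := by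
        rw [sum_Ico_succ_top hR, exp_add, mul_assoc]

theorem eq_sum_Ico_of_succ_eq {M : Type*} [AddCommMonoid M] {f g : ℕ → M} {R : ℕ} (hR : 1 ≤ R)
    (h1 : f 1 = 0) (h : ∀ r, 1 ≤ r → r < R → f (r + 1) = f r + g r) :
    f R = ∑ r ∈ Ico 1 R, g r := by
  induction R, hR using Nat.le_induction with
  | base => simp [h1]
  | succ R hR ih =>
    rw [h R hR R.lt_succ_self, ih fun r h1 h2 => h r h1 (h2.trans R.lt_succ_self),
      sum_Ico_succ_top hR]

noncomputable section RoundedDuals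

variable {n : ℕ}

/-- The index set of the weights `w_{i,j,σ}`, with the sign `σ = ±1` kept as a real so that an
expert `(i, j, σ)` can be fed to `wt` and `lamOf` directly. -/
def experts (n : ℕ) : Finset (Fin n × Fin n × ℝ) := univ ×ˢ univ ×ˢ {1, -1}

/-- `exp (η * gain C α β e)` is the weight `w_e` computed from the exact duals `Dᵢⱼ = |αᵢ - βⱼ|`
instead of the rounded ones. -/
def gain (C : Fin n → Fin n → ℝ) (a b : Fin n → ℤ) (e : Fin n × Fin n × ℝ) : ℝ :=
  e.2.2 * (((a e.1 : ℝ) - b e.2.1) / C e.1 e.2.1)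

def potential (η : ℝ) (C : Fin n → Fin n → ℝ) (a b : Fin n → ℤ) : ℝ :=
  ∑ e ∈ experts n, exp (η * gain C a b e)

theorem sum_experts (f : Fin n → Fin n → ℝ → ℝ) :
    ∑ e ∈ experts n, f e.1 e.2.1 e.2.2 = ∑ i, ∑ j, (f i j 1 + f i j (-1)) := by
  simp only [experts, sum_product]
  exact sum_congr rfl fun i _ => sum_congr rfl fun j _ => sum_pair (by norm_num)

theorem abs_sign_eq_one_of_mem_experts {e : Fin n × Fin n × ℝ} (he : e ∈ experts n) :
    |e.2.2| = 1 := by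
  simp only [experts, mem_product, mem_univ, mem_insert, mem_singleton, true_and] at he
  rcases he with h | h <;> simp [h]

theorem gain_add (C : Fin n → Fin n → ℝ) (a b a' b' : Fin n → ℤ) (e : Fin n × Fin n × ℝ) :
    gain C (a + a') (b + b') e = gain C a b e + gain C a' b' e := by
  simp only [gain, Pi.add_apply, Int.cast_add]; ring

theorem abs_gain_le {C : Fin n → Fin n → ℝ} (hC : ∀ i j, 0 < C i j) {a b : Fin n → ℤ} {K : ℝ}
    (hab : ∀ i j, |(a i : ℝ) - b j| ≤ K * C i j) {e : Fin n × Fin n × ℝ} (he : e ∈ experts n) :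
    |gain C a b e| ≤ K := by
  rw [gain, abs_mul, abs_sign_eq_one_of_mem_experts he, one_mul, abs_div,
    abs_of_pos (hC _ _), div_le_iff₀ (hC _ _)]
  exact hab _ _

theorem potential_zero (η : ℝ) (C : Fin n → Fin n → ℝ) : potential η C 0 0 = 2 * n ^ 2 := by
  simp [potential, gain, experts, card_product, card_pair (show (1 : ℝ) ≠ -1 by norm_num)]
  ring

theorem exp_le_potential (η : ℝ) (C : Fin n → Fin n → ℝ) (a b : Fin n → ℤ) (i j : Fin n) :
    exp (η * (|(a i : ℝ) - b j| / C i j)) ≤ potential η C a b := by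
  let σ : ℝ := if 0 ≤ (a i : ℝ) - b j then 1 else -1
  have hmem : (i, j, σ) ∈ experts n := by
    simp only [experts, mem_product, mem_univ, mem_insert, mem_singleton, true_and, σ]
    split_ifs <;> simp
  have hgain : gain C a b (i, j, σ) = |(a i : ℝ) - b j| / C i j := by
    simp only [gain, σ]
    split_ifs with h
    · rw [abs_of_nonneg h, one_mul]
    · rw [abs_of_neg (not_le.mp h), neg_div, neg_one_mul]
  rw [← hgain]
  exact single_le_sum (f := fun e => exp (η * gain C a b e)) (fun _ _ => (exp_pos _).le) hmem

theorem IsRoundedDual.abs_sub_mul_le {χ : ℝ} {α β : Fin n → ℤ} {D P : Fin n → Fin n → ℝ}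
    (h : IsRoundedDual χ α β D P) (hχ : 0 ≤ χ) (i j : Fin n) :
    |((α i : ℝ) - β j) - P i j * D i j| ≤ χ * |(α i : ℝ) - β j| := by
  obtain ⟨-, hD, hP⟩ := h
  obtain ⟨hlow, hup⟩ := hD i j
  have hχD := mul_le_mul_of_nonneg_left hlow hχ
  rw [hP i j]
  split_ifs with hs
  · have hA : (0 : ℝ) ≤ (α i : ℝ) - β j := by exact_mod_cast sub_nonneg.mpr (sub_nonneg.mp hs)
    rw [abs_of_nonneg hA] at hlow hup hχD ⊢
    rw [abs_le]; constructor <;> linarith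
  · have hA : (α i : ℝ) - β j < 0 := by
      exact_mod_cast sub_neg.mpr (sub_neg.mp (not_le.mp hs))
    rw [abs_of_neg hA] at hlow hup hχD ⊢
    rw [abs_le]; constructor <;> linarith

theorem totW_eq_sum_experts (η : ℝ) (C D P : Fin n → Fin n → ℝ) :
    totW η C D P = ∑ e ∈ experts n, wt η C D P e.1 e.2.1 e.2.2 :=
  (sum_experts fun i j σ => wt η C D P i j σ).symm

theorem totW_pos [NeZero n] (η : ℝ) (C D P : Fin n → Fin n → ℝ) : 0 < totW η C D P := by
  rw [totW_eq_sum_experts]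
  exact sum_pos (fun _ _ => exp_pos _) ⟨(0, 0, 1), by simp [experts]⟩

theorem sum_lamOf_mul_eq (η : ℝ) (C D P : Fin n → Fin n → ℝ) (a b : Fin n → ℤ) :
    ∑ i, ∑ j, (lamOf η C D P i j 1 * (1 * (((a i : ℝ) - b j) / C i j)) +
      lamOf η C D P i j (-1) * ((-1) * (((a i : ℝ) - b j) / C i j))) =
    (∑ e ∈ experts n, wt η C D P e.1 e.2.1 e.2.2 * gain C a b e) / totW η C D P := by
  rw [← sum_experts fun i j σ => lamOf η C D P i j σ * (σ * (((a i : ℝ) - b j) / C i j)), sum_div]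
  exact sum_congr rfl fun e _ => by rw [lamOf, gain, div_mul_eq_mul_div]

theorem abs_wt_sub_exp_gain_le {η χ M : ℝ} {C D P : Fin n → Fin n → ℝ} {α β : Fin n → ℤ}
    (hC : ∀ i j, 0 < C i j) (hη : 0 ≤ η) (hχ : 0 ≤ χ) (hδ : η * χ * M ≤ 1)
    (hdual : IsRoundedDual χ α β D P) (hdrift : ∀ i j, |(α i : ℝ) - β j| ≤ M * C i j)
    {e : Fin n × Fin n × ℝ} (he : e ∈ experts n) :
    |wt η C D P e.1 e.2.1 e.2.2 - exp (η * gain C α β e)| ≤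
      2 * (η * χ * M) * exp (η * gain C α β e) := by
  obtain ⟨i, j, σ⟩ := e
  have hdiff : |η * (σ * P i j) * D i j / C i j - η * gain C α β (i, j, σ)| ≤ η * χ * M := by
    have hrw : η * (σ * P i j) * D i j / C i j - η * gain C α β (i, j, σ) =
        -(η * σ * ((((α i : ℝ) - β j) - P i j * D i j) / C i j)) := by
      simp only [gain]; ring
    rw [hrw, abs_neg, abs_mul, abs_mul, abs_of_nonneg hη, abs_sign_eq_one_of_mem_experts he,
      mul_one, abs_div, abs_of_pos (hC i j)]
    calc η * (|((α i : ℝ) - β j) - P i j * D i j| / C i j)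
        ≤ η * (χ * (M * C i j) / C i j) := by
          gcongr
          exacts [(hC i j).le, (hdual.abs_sub_mul_le hχ i j).trans (by gcongr; exact hdrift i j)]
      _ = η * χ * M := by field_simp [(hC i j).ne']
  calc _ ≤ 2 * |η * (σ * P i j) * D i j / C i j - η * gain C α β (i, j, σ)| *
        exp (η * gain C α β (i, j, σ)) := abs_exp_sub_exp_le (hdiff.trans hδ)
    _ ≤ 2 * (η * χ * M) * exp (η * gain C α β (i, j, σ)) := by gcongr

theorem potential_add_le [NeZero n] {η K γ χ M v : ℝ} {C D P : Fin n → Fin n → ℝ}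
    {α β αt βt : Fin n → ℤ} (hC : ∀ i j, 0 < C i j) (hη : 0 ≤ η) (hηK : η * K ≤ 1)
    (hγ : 0 ≤ γ) (hγK : γ ≤ K) (hχ : 0 ≤ χ) (hδ : η * χ * M ≤ 1)
    (hdual : IsRoundedDual χ α β D P) (hdrift : ∀ i j, |(α i : ℝ) - β j| ≤ M * C i j)
    (hadv : ∑ i, ∑ j, (lamOf η C D P i j 1 * (1 * (((αt i : ℝ) - βt j) / C i j)) +
      lamOf η C D P i j (-1) * ((-1) * (((αt i : ℝ) - βt j) / C i j))) ≤ v - γ)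
    (hstep : ∀ i j, |(αt i : ℝ) - βt j| ≤ K * C i j) (hv : |v| ≤ K) :
    potential η C (α + αt) (β + βt) ≤
      potential η C α β * exp (η * v - η * (γ - 6 * K * (η * χ * M) - η * K ^ 2)) := by
  have hgain : ∀ e ∈ experts n, |gain C αt βt e| ≤ K := fun e he => abs_gain_le hC hstep he
  have hm : |v - γ| ≤ 2 * K := by rw [abs_le] at hv ⊢; constructor <;> linarith
  rw [sum_lamOf_mul_eq, div_le_iff₀ (totW_pos η C D P), totW_eq_sum_experts, mul_comm] at hadv
  have hexact := sum_mul_le_of_abs_sub_le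
    (fun e he => abs_wt_sub_exp_gain_le hC hη hχ hδ hdual hdrift he) hgain hm hadv
  have hnext := sum_mul_exp_le_of_sum_mul_le (fun _ _ => (exp_pos _).le) hgain hη hηK hexact
  have hsplit : potential η C (α + αt) (β + βt) =
      ∑ e ∈ experts n, exp (η * gain C α β e) * exp (η * gain C αt βt e) := by
    simp only [potential, gain_add, mul_add, exp_add]
  rw [hsplit, potential]
  convert hnext using 3; ring

/-- The paper's `ṽ`. -/
def dualObjective (t : ℝ) (a b : Fin n → ℤ) : ℝ := (1 / t) * ((∑ i, (a i : ℝ)) - ∑ j, (b j : ℝ))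

theorem dualObjective_sum (t : ℝ) (S : Finset ℕ) (a b : ℕ → Fin n → ℤ) :
    dualObjective t (∑ r ∈ S, a r) (∑ r ∈ S, b r) = ∑ r ∈ S, dualObjective t (a r) (b r) := by
  simp only [dualObjective, Finset.sum_apply, Int.cast_sum, ← mul_sum, sum_sub_distrib]
  congr 2 <;> exact sum_comm

end RoundedDuals

section Run

variable {n R : ℕ} {α β αt βt : ℕ → Fin n → ℤ}

theorem eq_sum_Ico_of_run (hα1 : α 1 = 0) (hβ1 : β 1 = 0)
    (hupd : ∀ r, 1 ≤ r → r ≤ R - 1 → α (r + 1) = α r + αt r ∧ β (r + 1) = β r + βt r)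
    {r : ℕ} (h1 : 1 ≤ r) (h2 : r ≤ R) :
    α r = ∑ s ∈ Ico 1 r, αt s ∧ β r = ∑ s ∈ Ico 1 r, βt s :=
  ⟨eq_sum_Ico_of_succ_eq h1 hα1 fun s hs1 hs2 => (hupd s hs1 (by omega)).1,
    eq_sum_Ico_of_succ_eq h1 hβ1 fun s hs1 hs2 => (hupd s hs1 (by omega)).2⟩

theorem abs_sub_le_of_run {C : Fin n → Fin n → ℝ} {K : ℝ} (hCK : ∀ i j, 0 ≤ K * C i j)
    (hα1 : α 1 = 0) (hβ1 : β 1 = 0)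
    (hupd : ∀ r, 1 ≤ r → r ≤ R - 1 → α (r + 1) = α r + αt r ∧ β (r + 1) = β r + βt r)
    (hstep : ∀ r, 1 ≤ r → r ≤ R - 1 → ∀ i j, |(αt r i : ℝ) - βt r j| ≤ K * C i j)
    {r : ℕ} (h1 : 1 ≤ r) (h2 : r ≤ R) (i j : Fin n) :
    |(α r i : ℝ) - β r j| ≤ R * K * C i j := by
  obtain ⟨hα, hβ⟩ := eq_sum_Ico_of_run hα1 hβ1 hupd h1 h2
  have hsum := abs_sum_sub_sum_le_card_mul (Ico 1 r) fun s hs =>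
    hstep s (mem_Ico.1 hs).1 (by grind) i j
  rw [hα, hβ, Finset.sum_apply, Finset.sum_apply]
  push_cast
  calc _ ≤ #(Ico 1 r) * (K * C i j) := hsum
    _ ≤ R * (K * C i j) := by
      gcongr
      · exact hCK i j
      · rw [Nat.card_Ico]; omega
    _ = R * K * C i j := by ring

end Run

theorem mwu_parameter_bounds {n : ℕ} {K γ η χ R : ℝ} (hn : 1 ≤ n) (hK : 1 ≤ K) (hγ : 0 < γ)
    (hγK : γ ≤ K) (hη : 0 < η) (hηc : η ≤ 1 / 10 * γ / K ^ 2)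
    (hR : 10 * log (2 * (n : ℝ) ^ 2) / (η * γ) ≤ R) (hχc : χ ≤ 1 / 10 * γ / (R * K)) :
    η * K ≤ 1 ∧ 2 ≤ R ∧ log (2 * (n : ℝ) ^ 2) ≤ η * γ * R / 10 ∧
      η * χ * (R * K) ≤ 1 ∧ γ / 2 ≤ γ - 6 * K * (η * χ * (R * K)) - η * K ^ 2 := by
  have hηK2 : η * K ^ 2 ≤ γ / 10 := by
    rw [le_div_iff₀ (by positivity)] at hηc; linarith
  have hηK : η * K ≤ 1 / 10 := by nlinarith
  have hηγ : η * γ ≤ 1 / 10 := by nlinarith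
  have hlog2 : log 2 ≤ log (2 * (n : ℝ) ^ 2) :=
    log_le_log two_pos (by nlinarith [(Nat.one_le_cast (α := ℝ)).mpr hn])
  have hRL : 10 * log (2 * (n : ℝ) ^ 2) ≤ R * (η * γ) := (div_le_iff₀ (by positivity)).mp hR
  have hR0 : 0 < R := by
    by_contra! h; nlinarith [log_two_gt_d9, mul_pos hη hγ]
  have hR2 : 2 ≤ R := by nlinarith [log_two_gt_d9, mul_le_mul_of_nonneg_left hηγ hR0.le]
  have hχRK : χ * (R * K) ≤ γ / 10 := by
    rw [le_div_iff₀ (by positivity)] at hχc; linarith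
  have hKδ : K * (η * χ * (R * K)) ≤ γ / 100 := by
    have : K * (η * χ * (R * K)) = (η * K) * (χ * (R * K)) := by ring
    rw [this]; nlinarith [mul_pos hη (by positivity : (0 : ℝ) < K)]
  refine ⟨by linarith, hR2, by linarith, ?_, by linarith⟩
  have : η * χ * (R * K) = η * (χ * (R * K)) := by ring
  rw [this]; nlinarith

theorem le_sub_of_mul_le_log_add {η γ R L ε V a : ℝ} (hη : 0 < η) (hγ : 0 < γ) (hR : 2 ≤ R)
    (hL : L ≤ η * γ * R / 10) (hε : γ / 2 ≤ ε) (h : η * a ≤ L + (η * V - (R - 1) * (η * ε))) :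
    γ / 10 * R ≤ V - a := by
  have hgap : (R - 1) * (η * (γ / 2)) ≤ (R - 1) * (η * ε) := by gcongr; linarith
  refine le_of_mul_le_mul_left ?_ hη
  nlinarith [mul_pos hη hγ]

theorem averaged_gap_eq {ι : Type*} [Fintype ι] (x y : ι → ℝ) (t c : ℝ) {R : ℝ} (hR : 0 < R)
    (i j : ι) :
    (1 / t) * ((∑ i', x i' / R) - ∑ j', y j' / R) - |x i / R - y j / R| / c =
      ((1 / t) * ((∑ i', x i') - ∑ j', y j') - |x i - y j| / c) / R := by
  rw [← sum_div, ← sum_div, ← sub_div, ← sub_div, abs_div, abs_of_pos hR]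
  ring

/-- the multiplicative weights update procedure, driven by any certification
oracle outputs satisfying (i)–(iii), produces after `R` rounds an averaged dual solution
`(α, β) = (1/R)·(α^R, β^R)` lying in `Γ_t` with slack `γ/10`. -/
theorem mwu_produces_certificate :
    ∃ c₁ c₂ c₃ : ℝ, 0 < c₁ ∧ 0 < c₂ ∧ 0 < c₃ ∧
    ∀ (n : ℕ), 1 ≤ n →
    ∀ (t : ℝ), 0 < t →
    ∀ (C : Fin n → Fin n → ℝ), (∀ i j, 0 < C i j) →
    ∀ (K γ η : ℝ), 1 ≤ K → 0 < γ → γ ≤ K → 0 < η → η ≤ c₁ * γ / K ^ 2 →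
    ∀ (R : ℕ), c₂ * Real.log (2 * (n : ℝ) ^ 2) / (η * γ) ≤ (R : ℝ) →
    ∀ (χ : ℝ), χ ∈ Set.Ioo (0 : ℝ) 1 → χ ≤ c₃ * γ / ((R : ℝ) * K) →
    ∀ (α β αt βt : ℕ → Fin n → ℤ) (D P : ℕ → Fin n → Fin n → ℝ),
      α 1 = 0 → β 1 = 0 →
      (∀ r, 1 ≤ r → r ≤ R - 1 → IsRoundedDual χ (α r) (β r) (D r) (P r)) →
      (∀ r, 1 ≤ r → r ≤ R - 1 →
        (∑ i, ∑ j,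
          (lamOf η C (D r) (P r) i j 1 * (1 * (((αt r i : ℝ) - (βt r j : ℝ)) / C i j)) +
           lamOf η C (D r) (P r) i j (-1) *
             ((-1) * (((αt r i : ℝ) - (βt r j : ℝ)) / C i j)))) ≤
          (1 / t) * ((∑ i, (αt r i : ℝ)) - ∑ j, (βt r j : ℝ)) - γ) →
      (∀ r, 1 ≤ r → r ≤ R - 1 → ∀ i j, |(αt r i : ℝ) - (βt r j : ℝ)| ≤ K * C i j) →
      (∀ r, 1 ≤ r → r ≤ R - 1 →
        |(1 / t) * ((∑ i, (αt r i : ℝ)) - ∑ j, (βt r j : ℝ))| ≤ K) →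
      (∀ r, 1 ≤ r → r ≤ R - 1 → α (r + 1) = α r + αt r ∧ β (r + 1) = β r + βt r) →
      ∀ i j,
        γ / 10 ≤ (1 / t) * ((∑ i', (α R i' : ℝ) / R) - ∑ j', (β R j' : ℝ) / R) -
            |(α R i : ℝ) / R - (β R j : ℝ) / R| / C i j ∧
        0 < (1 / t) * ((∑ i', (α R i' : ℝ) / R) - ∑ j', (β R j' : ℝ) / R) -
            |(α R i : ℝ) / R - (β R j : ℝ) / R| / C i j := by
  refine ⟨1 / 10, 10, 1 / 10, by norm_num, by norm_num, by norm_num, ?_⟩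
  intro n hn t _ C hC K γ η hK hγ hγK hη hηc R hR χ hχ hχc α β αt βt D P hα1 hβ1 hdual hadv
    hstep hv hupd i j
  have : NeZero n := ⟨by omega⟩
  obtain ⟨hηK, hR2, hL, hδ, hε⟩ := mwu_parameter_bounds hn hK hγ hγK hη hηc hR hχc
  have hR1 : 1 ≤ R := by exact_mod_cast (show (1 : ℝ) ≤ R by linarith)
  have hCK : ∀ i j, 0 ≤ K * C i j := fun i j => by nlinarith [hC i j]
  set ε := γ - 6 * K * (η * χ * (R * K)) - η * K ^ 2
  have hΦ := le_mul_exp_sum_Ico_of_le_mul_exp (a := fun r => potential η C (α r) (β r))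
    (b := fun r => η * dualObjective t (αt r) (βt r) - η * ε) hR1 fun r h1 h2 => by
      rw [(hupd r h1 (by omega)).1, (hupd r h1 (by omega)).2]
      exact potential_add_le hC hη.le hηK hγ.le hγK hχ.1.le hδ (hdual r h1 (by omega))
        (abs_sub_le_of_run hCK hα1 hβ1 hupd hstep h1 h2.le) (hadv r h1 (by omega))
        (hstep r h1 (by omega)) (hv r h1 (by omega))
  obtain ⟨hαR, hβR⟩ := eq_sum_Ico_of_run hα1 hβ1 hupd hR1 le_rfl
  have hsum : ∑ r ∈ Ico 1 R, (η * dualObjective t (αt r) (βt r) - η * ε) =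
      η * dualObjective t (α R) (β R) - (R - 1) * (η * ε) := by
    rw [sum_sub_distrib, ← mul_sum, ← dualObjective_sum, ← hαR, ← hβR, sum_const, Nat.card_Ico,
      nsmul_eq_mul, Nat.cast_sub hR1, Nat.cast_one]
  have hlog : η * (|(α R i : ℝ) - β R j| / C i j) ≤
      log (2 * n ^ 2) + (η * dualObjective t (α R) (β R) - (R - 1) * (η * ε)) := by
    rw [hα1, hβ1, potential_zero] at hΦ
    rw [← hsum, ← exp_le_exp, exp_add, exp_log (by positivity)]
    exact (exp_le_potential η C _ _ i j).trans hΦ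
  have hgap := le_sub_of_mul_le_log_add hη hγ hR2 hL hε hlog
  rw [averaged_gap_eq _ _ _ _ (by linarith)]
  have hcert := (le_div_iff₀ (by linarith)).mpr hgap
  exact ⟨hcert, (by positivity : 0 < γ / 10).trans_le hcert⟩
end
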